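/- arXiv:1108.2866 — 4 statements merged into one kernel-verified Lean document; each statement's English description precedes it below -/
import Mathlib

section
/- Let r ≥ 3 be an integer and G = C_2^r. Then C_0(G) = {η(C_2^r) - 3, η(C_2^r) - 2} = {2^r - 3, 2^r - 2}. -/
/-!
In `V = 𝔽₂ ^ r` every nonzero element has order `2`, so a sequence has a short zero-sum
subsequence iff it contains `0` or a repeated term. Thus `t ∈ C₀(V)` iff no `t`-subset of
`V ∖ {0}` sums to zero, while linear algebra over `𝔽₂` gives `D(V) = r + 1` and
`η(V) = 2 ^ r`. The elements of `V ∖ {0}` sum to zero, so complementation in `V ∖ {0}`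
exchanges zero-sum subsets of sizes `t` and `2 ^ r - 1 - t`; sizes `1` and `2` are
impossible, hence so are `2 ^ r - 2` and `2 ^ r - 3`. Every other size `t ≥ 3` occurs: if
`V = W ⊕ 𝔽₂ e` and `B ⊆ W ∖ {0}` has size `t - 2` and sum `s ≠ 0` (one exists for
`t ≤ |W|`), then `B ∪ {e, e + s}` sums to zero, and complementation covers the remaining
sizes.
-/

/-- `S` contains a short zero-sum subsequence: a nonempty subsequence with sum `0`
whose length is at most `exp(G)`. -/
def HasShortZeroSumSubseq {G : Type*} [AddCommGroup G] (S : Multiset G) : Prop :=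
  ∃ T, T ≤ S ∧ T.sum = 0 ∧ 1 ≤ Multiset.card T ∧ Multiset.card T ≤ AddMonoid.exponent G

/-- `η G` : the smallest `d` such that every sequence over `G` of length at least `d`
contains a short zero-sum subsequence. -/
noncomputable def etaConst (G : Type*) [AddCommGroup G] : ℕ :=
  sInf {d : ℕ | ∀ S : Multiset G, d ≤ Multiset.card S → HasShortZeroSumSubseq S}

/-- `D G` : the Davenport constant, the smallest `d` such that every sequence over `G`
of length at least `d` contains a nonempty zero-sum subsequence. -/
noncomputable def davenport (G : Type*) [AddCommGroup G] : ℕ :=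
  sInf {d : ℕ | ∀ S : Multiset G, d ≤ Multiset.card S → ∃ T, T ≤ S ∧ T ≠ 0 ∧ T.sum = 0}

/-- `C₀(G)` : the set of `t ∈ [D(G)+1, η(G)-1]` such that every zero-sum sequence over
`G` of length exactly `t` contains a short zero-sum subsequence. -/
def C0 (G : Type*) [AddCommGroup G] : Set ℕ :=
  {t | davenport G + 1 ≤ t ∧ t ≤ etaConst G - 1 ∧
    ∀ S : Multiset G, Multiset.card S = t → S.sum = 0 → HasShortZeroSumSubseq S}

open Finset Function

def zeroSumSubsetCards (G : Type*) [AddCommGroup G] : Set ℕ :=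
  {t | ∃ A : Finset G, 0 ∉ A ∧ #A = t ∧ ∑ x ∈ A, x = 0}

section AddCommGroup

variable {G : Type*} [AddCommGroup G]

theorem zero_mem_zeroSumSubsetCards : 0 ∈ zeroSumSubsetCards G :=
  ⟨∅, by simp⟩

theorem one_notMem_zeroSumSubsetCards : 1 ∉ zeroSumSubsetCards G := by
  rintro ⟨A, hA0, hA, hsum⟩
  obtain ⟨x, rfl⟩ := card_eq_one.mp hA
  simp_all

theorem card_sub_one_sub_mem_zeroSumSubsetCards [Fintype G] (hG : ∑ x : G, x = 0) {t : ℕ}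
    (ht : t ∈ zeroSumSubsetCards G) : Fintype.card G - 1 - t ∈ zeroSumSubsetCards G := by
  classical
  obtain ⟨A, hA0, rfl, hsum⟩ := ht
  have hA : A ⊆ univ.erase 0 := subset_erase.mpr ⟨subset_univ A, hA0⟩
  refine ⟨univ.erase 0 \ A, fun h ↦ (mem_erase.mp (mem_sdiff.mp h).1).1 rfl, ?_, ?_⟩
  · rw [card_sdiff_of_subset hA, card_erase_of_mem (mem_univ 0), card_univ]
  · have h := sum_sdiff (f := fun x ↦ x) hA
    rwa [sum_erase univ (f := fun x ↦ x) rfl, hG, hsum, add_zero] at h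

theorem Finset.exists_subset_card_eq_sum_ne_zero (s : Finset G) {m : ℕ} (hm : 1 ≤ m)
    (hms : m < #s) : ∃ B ⊆ s, #B = m ∧ ∑ x ∈ B, x ≠ 0 := by
  classical
  obtain ⟨B, hBs, hB⟩ := exists_subset_card_eq hms.le
  by_cases hsum : ∑ x ∈ B, x = 0
  · -- trading `x ∈ B` for `y ∈ s \ B` turns the sum into `y - x ≠ 0`
    obtain ⟨x, hx⟩ := card_pos.mp (hB ▸ hm)
    obtain ⟨y, hys, hyB⟩ :=
      exists_of_ssubset (ssubset_of_subset_of_ne hBs (by rintro rfl; omega))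
    have hyx : y ∉ B.erase x := fun h ↦ hyB (mem_of_mem_erase h)
    refine ⟨insert y (B.erase x), insert_subset hys ((erase_subset x B).trans hBs), ?_, ?_⟩
    · rw [card_insert_of_notMem hyx, card_erase_of_mem hx, hB]
      omega
    · have hxy : y - x ≠ 0 := sub_ne_zero.mpr (ne_of_mem_of_not_mem hx hyB).symm
      rwa [sum_insert hyx, eq_sub_of_add_eq (sum_erase_add B (fun x ↦ x) hx), hsum, zero_sub,
        ← sub_eq_add_neg]
  · exact ⟨B, hBs, hB, hsum⟩

variable {V : Type*} [AddCommGroup V] [Module (ZMod 2) V]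

theorem two_notMem_zeroSumSubsetCards : 2 ∉ zeroSumSubsetCards V := by
  classical
  rintro ⟨A, -, hA, hsum⟩
  obtain ⟨x, y, hxy, rfl⟩ := card_eq_two.mp hA
  rw [sum_pair hxy] at hsum
  exact hxy (by rw [eq_neg_of_add_eq_zero_left hsum, ZModModule.neg_eq_self])

/-- Witness: for `B ⊆ G ∖ {0}` of size `t - 2` with sum `s ≠ 0`, the set
`f B ∪ {e, e + f s}`. -/
theorem Icc_three_card_subset_zeroSumSubsetCards [Fintype G] {f : G →+ V} (hf : Injective f)
    {e : V} (he : e ∉ Set.range f) : Set.Icc 3 (Fintype.card G) ⊆ zeroSumSubsetCards V := by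
  classical
  rintro t ⟨ht3, htG⟩
  obtain ⟨B, hB0, hB, hsum⟩ := (univ.erase (0 : G)).exists_subset_card_eq_sum_ne_zero
    (m := t - 2) (by omega) (by rw [card_erase_of_mem (mem_univ 0), card_univ]; omega)
  set s := ∑ x ∈ B, x
  have hfs : f s ≠ 0 := (map_ne_zero_iff f hf).mpr hsum
  have hes_notMem : e + f s ∉ B.map ⟨f, hf⟩ := by
    simp only [mem_map, Embedding.coeFn_mk, not_exists, not_and]
    intro b _ hb
    exact he ⟨b - s, by rw [map_sub, hb, add_sub_cancel_right]⟩
  have he_notMem : e ∉ insert (e + f s) (B.map ⟨f, hf⟩) := by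
    simp only [mem_insert, mem_map, Embedding.coeFn_mk, not_or, not_exists, not_and]
    exact ⟨by simpa using hfs, fun b _ hb ↦ he ⟨b, hb⟩⟩
  refine ⟨insert e (insert (e + f s) (B.map ⟨f, hf⟩)), ?_, ?_, ?_⟩
  · simp only [mem_insert, mem_map, Embedding.coeFn_mk, not_or, not_exists, not_and]
    refine ⟨fun h ↦ he ⟨0, by rw [map_zero, h]⟩, fun h ↦ he ⟨-s, ?_⟩,
      fun b hb h ↦ ?_⟩
    · rw [map_neg, eq_neg_of_add_eq_zero_left h.symm]
    · exact (mem_erase.mp (hB0 hb)).1 ((map_eq_zero_iff f hf).mp h)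
  · rw [card_insert_of_notMem he_notMem, card_insert_of_notMem hes_notMem, card_map, hB]
    omega
  · rw [sum_insert he_notMem, sum_insert hes_notMem, sum_map, Embedding.coeFn_mk, ← map_sum]
    change e + (e + f s + f s) = 0
    rw [add_assoc, ZModModule.add_self, add_zero, ZModModule.add_self]

end AddCommGroup

theorem sInf_setOf_forall_le_card_eq {α : Type*} {P : Multiset α → Prop} {n : ℕ}
    (hP : ∀ S, n ≤ Multiset.card S → P S) (hn : ∃ S, Multiset.card S + 1 = n ∧ ¬P S) :
    sInf {d | ∀ S : Multiset α, d ≤ Multiset.card S → P S} = n := by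
  obtain ⟨S, hS, hPS⟩ := hn
  refine le_antisymm (Nat.sInf_le hP) (le_csInf ⟨n, hP⟩ fun d hd ↦ ?_)
  by_contra! h
  exact hPS (hd S (by omega))

theorem LinearIndepOn.eq_empty_of_sum_eq_zero {K M : Type*} [Ring K] [Nontrivial K]
    [AddCommGroup M] [Module K M] {s : Set M} (hs : LinearIndepOn K id s) {B : Finset M}
    (hB : ↑B ⊆ s) (hsum : ∑ x ∈ B, x = 0) : B = ∅ := by
  by_contra h
  obtain ⟨x, hx⟩ := nonempty_iff_ne_empty.mpr h
  exact one_ne_zero (linearIndepOn_iff'.mp hs B (fun _ ↦ 1) hB (by simpa using hsum) x hx)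

section ZModModule

variable {V : Type*} [AddCommGroup V] [Module (ZMod 2) V]

theorem exponent_eq_two [Nontrivial V] : AddMonoid.exponent V = 2 :=
  (AddMonoid.exponent_eq_prime_iff Nat.prime_two).mpr fun x hx ↦
    addOrderOf_eq_prime (by rw [two_nsmul, ZModModule.add_self]) hx

theorem not_hasShortZeroSumSubseq_iff [Nontrivial V] {S : Multiset V} :
    ¬HasShortZeroSumSubseq S ↔ ∃ A : Finset V, 0 ∉ A ∧ A.val = S := by
  classical
  constructor
  · intro h
    have hnd : S.Nodup := by
      refine Multiset.nodup_iff_count_le_one.mpr fun x ↦ not_lt.mp fun hx ↦ h ?_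
      refine ⟨Multiset.replicate 2 x, Multiset.le_count_iff_replicate_le.mp hx, ?_, ?_, ?_⟩ <;>
        simp [exponent_eq_two, ZModModule.add_self]
    have h0 : 0 ∉ S := fun h0 ↦
      h ⟨{0}, Multiset.singleton_le.mpr h0, by simp [exponent_eq_two]⟩
    exact ⟨⟨S, hnd⟩, h0, rfl⟩
  · rintro ⟨A, hA0, rfl⟩ ⟨T, hTA, hT0, hT1, hT2⟩
    let B : Finset V := ⟨T, Multiset.nodup_of_le hTA A.nodup⟩
    have hB : Multiset.card T ∈ zeroSumSubsetCards V :=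
      ⟨B, fun h ↦ hA0 (val_le_iff.mp hTA h), rfl,
        by rw [← hT0, ← sum_map_val, Multiset.map_id']⟩
    rw [exponent_eq_two] at hT2
    interval_cases Multiset.card T
    · exact one_notMem_zeroSumSubsetCards hB
    · exact two_notMem_zeroSumSubsetCards hB

theorem forall_hasShortZeroSumSubseq_iff [Nontrivial V] {t : ℕ} :
    (∀ S : Multiset V, Multiset.card S = t → S.sum = 0 → HasShortZeroSumSubseq S) ↔
      t ∉ zeroSumSubsetCards V := by
  constructor
  · rintro h ⟨A, hA0, rfl, hsum⟩
    exact not_hasShortZeroSumSubseq_iff.mpr ⟨A, hA0, rfl⟩ (h A.val rfl (by rwa [sum_val]))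
  · intro ht S hS hsum
    by_contra hS'
    obtain ⟨A, hA0, rfl⟩ := not_hasShortZeroSumSubseq_iff.mp hS'
    exact ht ⟨A, hA0, hS, by rwa [sum_val] at hsum⟩

theorem etaConst_eq_card [Fintype V] [Nontrivial V] : etaConst V = Fintype.card V := by
  classical
  have hV := Fintype.card_pos (α := V)
  refine sInf_setOf_forall_le_card_eq (fun S hS ↦ ?_) ⟨(univ.erase 0).val, ?_, ?_⟩
  · by_contra h
    obtain ⟨A, hA0, rfl⟩ := not_hasShortZeroSumSubseq_iff.mp h
    have hA := card_le_card (subset_erase.mpr ⟨subset_univ A, hA0⟩)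
    rw [card_erase_of_mem (mem_univ _), card_univ] at hA
    change Fintype.card V ≤ #A at hS
    omega
  · rw [← card_def, card_erase_of_mem (mem_univ _), card_univ]
    omega
  · exact not_hasShortZeroSumSubseq_iff.mpr ⟨_, notMem_erase 0 univ, rfl⟩

theorem Finset.exists_nonempty_subset_sum_eq_zero_of_finrank_lt_card [Finite V] {A : Finset V}
    (hA : Module.finrank (ZMod 2) V < #A) : ∃ B ⊆ A, B.Nonempty ∧ ∑ x ∈ B, x = 0 := by
  classical
  obtain ⟨f, hf, x, hx, hfx⟩ := Module.exists_nontrivial_relation_of_finrank_lt_card hA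
  refine ⟨A.filter (f · ≠ 0), filter_subset _ A, ⟨x, mem_filter.mpr ⟨hx, hfx⟩⟩, ?_⟩
  rw [← hf, sum_filter]
  refine sum_congr rfl fun y _ ↦ ?_
  have hZMod : ∀ c : ZMod 2, c ≠ 0 → c = 1 := by decide
  split_ifs with hy
  · rw [hZMod _ hy, one_smul]
  · rw [not_not.mp hy, zero_smul]

theorem davenport_eq_finrank_add_one [Finite V] :
    davenport V = Module.finrank (ZMod 2) V + 1 := by
  classical
  let b := Module.finBasis (ZMod 2) V
  refine sInf_setOf_forall_le_card_eq (fun S hS ↦ ?_) ⟨(univ.image b).val, ?_, ?_⟩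
  · by_cases hnd : S.Nodup
    · obtain ⟨B, hBS, hB, hsum⟩ :=
        exists_nonempty_subset_sum_eq_zero_of_finrank_lt_card (A := ⟨S, hnd⟩) hS
      exact ⟨B.val, val_le_iff.mpr hBS, nonempty_iff_ne_empty.mp hB ∘ val_eq_zero.mp,
        by rwa [sum_val]⟩
    · obtain ⟨x, hx⟩ : ∃ x, 1 < S.count x := by
        simpa [Multiset.nodup_iff_count_le_one] using hnd
      exact ⟨Multiset.replicate 2 x, Multiset.le_count_iff_replicate_le.mp hx, by simp,
        by simp [ZModModule.add_self]⟩
  · rw [← card_def, card_image_of_injective _ b.injective, card_univ, Fintype.card_fin]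
  · rintro ⟨T, hT, hT0, hsum⟩
    let B : Finset V := ⟨T, Multiset.nodup_of_le hT (univ.image b).nodup⟩
    have hB : B = ∅ :=
      ((linearIndepOn_id_range_iff b.injective).mpr b.linearIndependent).eq_empty_of_sum_eq_zero
        (fun y hy ↦ by simpa using val_le_iff.mp hT hy) ((sum_val B).symm.trans hsum)
    exact hT0 (congrArg Finset.val hB)

theorem mem_C0_iff [Fintype V] [Nontrivial V] {t : ℕ} :
    t ∈ C0 V ↔ Module.finrank (ZMod 2) V + 2 ≤ t ∧ t ≤ Fintype.card V - 1 ∧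
      t ∉ zeroSumSubsetCards V := by
  rw [C0, Set.mem_ofPred_eq, davenport_eq_finrank_add_one, etaConst_eq_card,
    forall_hasShortZeroSumSubseq_iff]

end ZModModule

theorem sum_univ_pi_zmod_two {ι : Type*} [Fintype ι] [DecidableEq ι]
    (hι : 2 ≤ Fintype.card ι) :
    ∑ x : ι → ZMod 2, x = 0 := by
  ext i
  have h := Fintype.sum_piFinset_apply (fun b : ZMod 2 ↦ b) univ i
  simp only [Fintype.piFinset_univ] at h
  rw [Finset.sum_apply, h, Pi.zero_apply, card_univ, ZMod.card,
    ← Nat.sub_add_cancel (by omega : 1 ≤ Fintype.card ι - 1), pow_succ, mul_nsmul, two_nsmul,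
    ZModModule.add_self]

theorem card_sub_one_sub_mem_zeroSumSubsetCards_pi {r t : ℕ} (hr : 2 ≤ r)
    (ht : t ∈ zeroSumSubsetCards (Fin r → ZMod 2)) :
    2 ^ r - 1 - t ∈ zeroSumSubsetCards (Fin r → ZMod 2) := by
  simpa using card_sub_one_sub_mem_zeroSumSubsetCards (sum_univ_pi_zmod_two (by simpa)) ht

theorem Icc_three_subset_zeroSumSubsetCards_pi {r : ℕ} (hr : 2 ≤ r) :
    Set.Icc 3 (2 ^ r - 4) ⊆ zeroSumSubsetCards (Fin r → ZMod 2) := by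
  obtain ⟨k, rfl⟩ : ∃ k, r = k + 1 := ⟨r - 1, by omega⟩
  let f : (Fin k → ZMod 2) →+ (Fin (k + 1) → ZMod 2) :=
    (LinearMap.vecCons (R := ZMod 2) 0 LinearMap.id).toAddMonoidHom
  have hf : Injective f := Fin.cons_right_injective (α := fun _ ↦ ZMod 2) 0
  have he : (Fin.cons 1 0 : Fin (k + 1) → ZMod 2) ∉ Set.range f := by
    rintro ⟨w, hw⟩
    simpa [f] using congrFun hw 0
  have hlow := Icc_three_card_subset_zeroSumSubsetCards hf he
  simp only [Fintype.card_fun, ZMod.card, Fintype.card_fin] at hlow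
  rintro t ⟨ht3, ht⟩
  by_cases htk : t ≤ 2 ^ k
  · exact hlow ⟨ht3, htk⟩
  · have h := card_sub_one_sub_mem_zeroSumSubsetCards_pi hr
      (hlow ⟨(by omega : 3 ≤ 2 ^ (k + 1) - 1 - t), by rw [pow_succ] at *; omega⟩)
    rwa [show 2 ^ (k + 1) - 1 - (2 ^ (k + 1) - 1 - t) = t by omega] at h

theorem mem_zeroSumSubsetCards_pi_iff {r t : ℕ} (hr : 2 ≤ r) (ht : 3 ≤ t) (htr : t < 2 ^ r) :
    t ∈ zeroSumSubsetCards (Fin r → ZMod 2) ↔ t ≠ 2 ^ r - 3 ∧ t ≠ 2 ^ r - 2 := by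
  constructor
  · intro h
    have h' := card_sub_one_sub_mem_zeroSumSubsetCards_pi hr h
    constructor <;> rintro rfl
    · rw [show 2 ^ r - 1 - (2 ^ r - 3) = 2 by omega] at h'
      exact two_notMem_zeroSumSubsetCards h'
    · rw [show 2 ^ r - 1 - (2 ^ r - 2) = 1 by omega] at h'
      exact one_notMem_zeroSumSubsetCards h'
  · rintro ⟨h3, h2⟩
    by_cases ht4 : t ≤ 2 ^ r - 4
    · exact Icc_three_subset_zeroSumSubsetCards_pi hr ⟨ht, ht4⟩
    · have h := card_sub_one_sub_mem_zeroSumSubsetCards_pi hr zero_mem_zeroSumSubsetCards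
      rwa [show 2 ^ r - 1 - 0 = t by omega] at h

theorem C0_pi_eq {r : ℕ} (hr : 3 ≤ r) : C0 (Fin r → ZMod 2) = {2 ^ r - 3, 2 ^ r - 2} := by
  have hr5 : r + 5 ≤ 2 ^ r := by
    induction r, hr using Nat.le_induction with
    | base => norm_num
    | succ n _ ih => rw [pow_succ]; omega
  have : NeZero r := ⟨by omega⟩
  ext t
  simp only [mem_C0_iff, Module.finrank_fin_fun, Fintype.card_fun, ZMod.card, Fintype.card_fin,
    Set.mem_insert_iff, Set.mem_singleton_iff]
  constructor
  · rintro ⟨h1, h2, h3⟩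
    by_contra h
    exact h3 ((mem_zeroSumSubsetCards_pi_iff (by omega) (by omega) (by omega)).mpr (by omega))
  · rintro (rfl | rfl) <;> refine ⟨by omega, by omega, fun h ↦ ?_⟩
    · exact ((mem_zeroSumSubsetCards_pi_iff (by omega) (by omega) (by omega)).mp h).1 rfl
    · exact ((mem_zeroSumSubsetCards_pi_iff (by omega) (by omega) (by omega)).mp h).2 rfl

theorem stmt_10 (r : ℕ) (hr : 3 ≤ r) :
    C0 (Fin r → ZMod 2) = {etaConst (Fin r → ZMod 2) - 3, etaConst (Fin r → ZMod 2) - 2} ∧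
    C0 (Fin r → ZMod 2) = {2 ^ r - 3, 2 ^ r - 2} := by
  have : NeZero r := ⟨by omega⟩
  have hη : etaConst (Fin r → ZMod 2) = 2 ^ r := by simp [etaConst_eq_card]
  rw [hη]
  exact ⟨C0_pi_eq hr, C0_pi_eq hr⟩
end

section
/- Let r be a positive integer, let G_1 = C_{n1}^r, G_2 = C_{n2}^r and G = C_{n1 n2}^r. Suppose that (i) (η(G_1) - 1)/(n1 - 1) = (η(G_2) - 1)/(n2 - 1) = (η(G) - 1)/(n1 n2 - 1) = c for some positive integer c; (ii) G_2 has Property C; and (iii) there exist t1 ∈ [1, n2 - 1] and t2 ∈ {1, 2} with t2 ≤ t1 such that every integer in [η(G_2) - t1, η(G_2) - t2] belongs to C_0(G_2). Then every integer in [η(G) - t1, η(G) - t2] belongs to C_0(G). -/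
/-- The group `C_n^r` has Property C: `η(C_n^r) = c(n-1) + 1` for some positive `c`, and
every sequence of length `c(n-1)` over `C_n^r` with no short zero-sum subsequence is of the
form `∏ᵢ gᵢ^{n-1}` with `g₁, …, g_c` pairwise distinct. -/
def PropertyC (n r : ℕ) : Prop :=
  ∃ c : ℕ, 0 < c ∧ etaConst (Fin r → ZMod n) = c * (n - 1) + 1 ∧
    ∀ S : Multiset (Fin r → ZMod n), Multiset.card S = c * (n - 1) →
      ¬ HasShortZeroSumSubseq S →
      ∃ g : Fin c → (Fin r → ZMod n), Function.Injective g ∧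
        S = ∑ i : Fin c, Multiset.replicate (n - 1) (g i)

/-!
Write `G = C_{n₁n₂}^r`, `Gᵢ = C_{nᵢ}^r`. Reduction modulo `n₂` maps `G` onto `G₂` with kernel
`n₂ G ≅ G₁`. Take a zero-sum sequence `S` over `G` of length `t` without short zero-sum
subsequence and split off as many disjoint blocks as possible (maximising their total length)
whose images are short zero-sum sequences of `G₂`. The block sums lie in the kernel, so there
are fewer than `η(G₁)` blocks; the image of the remainder is a zero-sum sequence over `G₂`
without short zero-sum subsequence. Counting lengths puts the remainder in the range where
`C₀(G₂)` applies, unless `t₂ = 2`, the remainder has length `η(G₂) - 1` and some block `W` has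
`2 ≤ |W| < n₂`. Then Property C says every value occurs `0` or `n₂ - 1` times in the image of
the remainder; exchanging one term of `W` for part of the remainder keeps the decomposition
maximal but leaves a value occurring between `1` and `n₂ - 2` times, a contradiction.
The same block argument for reduction modulo `n₁` gives `D(G) ≤ n₁ (D(G₂) - 1) + η(G₁)`,
which is the lower end `D(G) + 1 ≤ t` of `C₀(G)`.
-/

open Multiset AddMonoid

theorem Multiset.exists_le_map_eq {α β : Type*} {f : α → β} {T : Multiset β} {s : Multiset α}
    (h : T ≤ s.map f) : ∃ t ≤ s, t.map f = T := by
  induction T using Quotient.inductionOn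
  induction s using Quotient.inductionOn
  obtain ⟨w, hw, hws⟩ := h
  obtain ⟨x, hx, rfl⟩ := List.sublist_map_iff.1 hws
  exact ⟨x, hx.subperm, Quotient.sound hw⟩

theorem Multiset.join_le_join {α : Type*} {B B' : Multiset (Multiset α)} (h : B' ≤ B) :
    B'.join ≤ B.join := by
  obtain ⟨C, rfl⟩ := le_iff_exists_add.1 h
  simp [join_add]

theorem Multiset.join_eq_add_join_erase {α : Type*} [DecidableEq α] {B : Multiset (Multiset α)}
    {W : Multiset α} (hW : W ∈ B) : B.join = W + (B.erase W).join := by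
  rw [← join_cons, cons_erase hW]

theorem Multiset.card_join_cons_erase {α : Type*} [DecidableEq α] {B : Multiset (Multiset α)}
    {U W : Multiset α} (hW : W ∈ B) :
    card (U ::ₘ B.erase W).join + card W = card U + card B.join := by
  rw [join_cons, join_eq_add_join_erase hW, card_add, card_add]
  omega

theorem Multiset.add_sub_cons_eq_erase_add_sub {α : Type*} [DecidableEq α] {W R V : Multiset α}
    {w : α} (hw : w ∈ W) (hV : V ≤ R) : W + R - (w ::ₘ V) = W.erase w + (R - V) := by
  conv_lhs =>
    rw [← cons_erase hw, cons_add, ← singleton_add w V, ← singleton_add w,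
      add_tsub_add_eq_tsub_left]
  rw [add_tsub_assoc_of_le hV]

theorem AddMonoidHom.ker_compLeft_le_range_compLeft {A B C : Type*} [AddGroup A] [AddGroup B]
    [AddGroup C] {f : A →+ B} {g : C →+ A} (h : f.ker ≤ g.range) (I : Type*) :
    (f.compLeft I).ker ≤ (g.compLeft I).range := by
  intro x hx
  choose y hy using fun i => h (show x i ∈ f.ker from congrFun hx i)
  exact ⟨y, funext hy⟩

noncomputable def zmodMulHom {N : ℕ} (a b : ℕ) (h : a * b = N) : ZMod a →+ ZMod N :=
  ZMod.lift a ⟨zmultiplesHom (ZMod N) (b : ZMod N), by simp [← Nat.cast_mul, h]⟩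

theorem ker_castHom_le_range_zmodMulHom {a b N : ℕ} (h : a * b = N) (hb : b ∣ N) :
    (ZMod.castHom hb (ZMod b)).toAddMonoidHom.ker ≤ (zmodMulHom a b h).range := by
  intro x hx
  obtain ⟨z, rfl⟩ := ZMod.intCast_surjective x
  obtain ⟨q, rfl⟩ : (b : ℤ) ∣ z := by
    rw [← ZMod.intCast_zmod_eq_zero_iff_dvd]
    simpa [ZMod.cast_intCast hb] using hx
  exact ⟨q, by simp [zmodMulHom, mul_comm]⟩

theorem mul_mul_sub_one_eq {a b c : ℕ} (ha : 0 < a) (hb : 0 < b) :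
    c * (a * b - 1) = c * (a - 1) * b + c * (b - 1) := by
  have : 1 ≤ a * b := Nat.mul_pos ha hb
  zify [this, ha, hb]
  ring

theorem exponent_pi_zmod {r : ℕ} (n : ℕ) (hr : 0 < r) : exponent (Fin r → ZMod n) = n := by
  rw [exponent_pi]
  simp only [ZMod.exponent]
  exact Nat.dvd_antisymm (Finset.lcm_dvd fun _ _ => dvd_rfl)
    (Finset.dvd_lcm (Finset.mem_univ ⟨0, hr⟩))

section Constants

variable {G : Type*} [AddCommGroup G]

theorem hasShortZeroSumSubseq_of_etaConst_le (hη : 0 < etaConst G) {S : Multiset G}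
    (hS : etaConst G ≤ card S) : HasShortZeroSumSubseq S :=
  Nat.sInf_mem (Nat.nonempty_of_pos_sInf hη) S hS

theorem exists_zeroSum_of_davenport_le (hη : 0 < etaConst G) {S : Multiset G}
    (hS : davenport G ≤ card S) : ∃ T, T ≤ S ∧ T ≠ 0 ∧ T.sum = 0 := by
  refine Nat.sInf_mem (s := {d | ∀ S : Multiset G, d ≤ card S → ∃ T, T ≤ S ∧ T ≠ 0 ∧ T.sum = 0})
    ⟨etaConst G, fun S hS => ?_⟩ S hS
  obtain ⟨T, hTS, hT0, hT1, -⟩ := hasShortZeroSumSubseq_of_etaConst_le hη hS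
  exact ⟨T, hTS, card_pos.1 hT1, hT0⟩

theorem one_le_davenport (hη : 0 < etaConst G) : 1 ≤ davenport G := by
  by_contra h
  obtain ⟨T, hT, hT0, -⟩ := exists_zeroSum_of_davenport_le hη (S := 0) (by simp; omega)
  exact hT0 (le_zero.1 hT)

end Constants

def IsShortZeroSum {K : Type*} [AddCommGroup K] (T : Multiset K) : Prop :=
  T.sum = 0 ∧ 1 ≤ card T ∧ card T ≤ exponent K

section Blocks

variable {G K : Type*} [AddCommGroup G] [AddCommGroup K] (π : G →+ K)

def IsBlockDecomposition (S : Multiset G) (B : Multiset (Multiset G)) : Prop :=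
  (∀ W ∈ B, IsShortZeroSum (W.map π)) ∧ B.join ≤ S

def IsMaximalBlockDecomposition (S : Multiset G) (B : Multiset (Multiset G)) : Prop :=
  IsBlockDecomposition π S B ∧
    ∀ B', IsBlockDecomposition π S B' → card B'.join ≤ card B.join

variable {π} {S U W : Multiset G} {B B' : Multiset (Multiset G)}

theorem exists_le_isShortZeroSum_map {A : Multiset G} (h : HasShortZeroSumSubseq (A.map π)) :
    ∃ U ≤ A, IsShortZeroSum (U.map π) := by
  obtain ⟨T, hT, hTπ⟩ := h
  obtain ⟨U, hU, rfl⟩ := exists_le_map_eq hT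
  exact ⟨U, hU, hTπ⟩

namespace IsBlockDecomposition

theorem card_le (hB : IsBlockDecomposition π S B) (hW : W ∈ B) : card W ≤ exponent K := by
  simpa using (hB.1 W hW).2.2

theorem ne_zero (hB : IsBlockDecomposition π S B) (hW : W ∈ B) : W ≠ 0 := fun h => by
  simpa [h] using (hB.1 W hW).2.1

theorem card_join_le (hB : IsBlockDecomposition π S B) : card B.join ≤ card B * exponent K := by
  rw [card_join]
  simpa using sum_le_card_nsmul (B.map card) (exponent K) (by simpa using fun W => hB.card_le)

theorem join_ne_zero (hB : IsBlockDecomposition π S B) (h : B ≠ 0) : B.join ≠ 0 := by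
  obtain ⟨W, hW⟩ := exists_mem_of_ne_zero h
  exact fun h0 => hB.ne_zero hW (le_zero.1 (h0 ▸ le_sum_of_mem hW))

theorem map_sum (hB : IsBlockDecomposition π S B) (hW : W ∈ B) : π W.sum = 0 := by
  simpa [map_multiset_sum] using (hB.1 W hW).1

theorem map_sum_join (hB : IsBlockDecomposition π S B) : π B.join.sum = 0 := by
  rw [sum_join, map_multiset_sum, map_map]
  exact sum_eq_zero fun x hx => by
    obtain ⟨W, hW, rfl⟩ := mem_map.1 hx
    exact hB.map_sum hW

theorem mono (hB : IsBlockDecomposition π S B) (h : B' ≤ B) : IsBlockDecomposition π S B' :=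
  ⟨fun W hW => hB.1 W (mem_of_le h hW), (join_le_join h).trans hB.2⟩

theorem cons [DecidableEq G] (hB : IsBlockDecomposition π S B) (hU : U ≤ S - B.join)
    (hUπ : IsShortZeroSum (U.map π)) : IsBlockDecomposition π S (U ::ₘ B) := by
  refine ⟨fun W hW => ?_, ?_⟩
  · rcases mem_cons.1 hW with rfl | hW
    exacts [hUπ, hB.1 W hW]
  · rw [join_cons]
    calc U + B.join ≤ S - B.join + B.join := add_le_add_left hU _
      _ = S := tsub_add_cancel_of_le hB.2

variable [DecidableEq G]

theorem sum_map_sub_join (hB : IsBlockDecomposition π S B) (hS : S.sum = 0) :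
    ((S - B.join).map π).sum = 0 := by
  have := congrArg π (sum_add (S - B.join) B.join)
  rw [tsub_add_cancel_of_le hB.2, hS, _root_.map_zero, _root_.map_add, hB.map_sum_join,
    add_zero] at this
  rw [← map_multiset_sum, ← this]

theorem add_sub_join_add_join_erase (hB : IsBlockDecomposition π S B) (hW : W ∈ B) :
    W + (S - B.join) + (B.erase W).join = S := by
  rw [add_right_comm, ← join_eq_add_join_erase hW, add_tsub_cancel_of_le hB.2]

theorem exchange (hB : IsBlockDecomposition π S B) (hW : W ∈ B) (hU : U ≤ W + (S - B.join))
    (hUπ : IsShortZeroSum (U.map π)) : IsBlockDecomposition π S (U ::ₘ B.erase W) := by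
  refine ⟨fun V hV => ?_, ?_⟩
  · rcases mem_cons.1 hV with rfl | hV
    exacts [hUπ, hB.1 V (mem_of_mem_erase hV)]
  · rw [join_cons, ← hB.add_sub_join_add_join_erase hW]
    exact add_le_add_left hU _

theorem sub_join_exchange (hB : IsBlockDecomposition π S B) (hW : W ∈ B) :
    S - (U ::ₘ B.erase W).join = W + (S - B.join) - U := by
  conv_lhs => rw [← hB.add_sub_join_add_join_erase hW]
  rw [join_cons, add_tsub_add_eq_tsub_right]

theorem exists_mem_card_lt (hB : IsBlockDecomposition π S B)
    (h : card B.join < card B * exponent K) :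
    ∃ W ∈ B, card W < exponent K ∧ card B.join ≤ card W + (card B - 1) * exponent K := by
  obtain ⟨W, hW, hWK⟩ : ∃ W ∈ B, card W < exponent K := by
    by_contra! hall
    have := card_nsmul_le_sum (s := B.map card) (a := exponent K) (by simpa using hall)
    rw [card_map, smul_eq_mul, ← card_join] at this
    omega
  refine ⟨W, hW, hWK, ?_⟩
  have := (hB.mono (erase_le W B)).card_join_le
  rw [card_erase_of_mem hW, Nat.pred_eq_sub_one] at this
  rw [join_eq_add_join_erase hW, card_add]
  omega

end IsBlockDecomposition

theorem exists_isMaximalBlockDecomposition (π : G →+ K) (S : Multiset G) :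
    ∃ B, IsMaximalBlockDecomposition π S B := by
  let s := {k | ∃ B, IsBlockDecomposition π S B ∧ card B.join = k}
  have hne : s.Nonempty := ⟨0, 0, ⟨by simp, by simp⟩, by simp⟩
  have hbdd : BddAbove s := ⟨card S, by rintro _ ⟨B, hB, rfl⟩; exact card_le_card hB.2⟩
  obtain ⟨B, hB, hk⟩ := Nat.sSup_mem hne hbdd
  exact ⟨B, hB, fun B' hB' => hk ▸ le_csSup hbdd ⟨B', hB', rfl⟩⟩

theorem IsMaximalBlockDecomposition.not_hasShortZeroSumSubseq [DecidableEq G]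
    (hB : IsMaximalBlockDecomposition π S B) :
    ¬ HasShortZeroSumSubseq ((S - B.join).map π) := by
  intro h
  obtain ⟨U, hU, hUπ⟩ := exists_le_isShortZeroSum_map h
  have hUB := hB.1.cons hU hUπ
  have hU0 : U ≠ 0 := hUB.ne_zero (mem_cons_self U B)
  have := hB.2 _ hUB
  rw [join_cons, card_add] at this
  exact hU0 (card_eq_zero.1 (by omega))

theorem IsMaximalBlockDecomposition.card_sub_join_lt [DecidableEq G] (hηK : 0 < etaConst K)
    (hB : IsMaximalBlockDecomposition π S B) : card (S - B.join) < etaConst K := by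
  by_contra h
  exact hB.not_hasShortZeroSumSubseq
    (hasShortZeroSumSubseq_of_etaConst_le hηK (by simpa using not_lt.1 h))

end Blocks

section Lifting

variable {G H K : Type*} [AddCommGroup G] [AddCommGroup H] [AddCommGroup K]
  {π : G →+ K} {ρ : H →+ G} {S : Multiset G} {B : Multiset (Multiset G)}

theorem IsBlockDecomposition.exists_le_sum_join_eq_zero (hker : π.ker ≤ ρ.range)
    (hB : IsBlockDecomposition π S B) {T : Multiset H}
    (hT : T ≤ B.map fun W => Function.invFun ρ W.sum) (hT0 : T.sum = 0) :
    ∃ B' ≤ B, card B' = card T ∧ B'.join.sum = 0 := by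
  obtain ⟨B', hB', rfl⟩ := exists_le_map_eq hT
  refine ⟨B', hB', (card_map _ _).symm, ?_⟩
  have hlift : ∀ W ∈ B', ρ (Function.invFun ρ W.sum) = W.sum := fun W hW =>
    Function.invFun_eq (AddMonoidHom.mem_range.1 (hker ((hB.mono hB').map_sum hW)))
  calc B'.join.sum = (B'.map sum).sum := sum_join
    _ = ((B'.map fun W => Function.invFun ρ W.sum).map ρ).sum := by
      rw [map_map]
      exact congrArg _ (map_congr rfl fun W hW => (hlift W hW).symm)
    _ = 0 := by rw [← map_multiset_sum, hT0, _root_.map_zero]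

theorem davenport_le_of_ker_le_range (hker : π.ker ≤ ρ.range) (hηH : 0 < etaConst H)
    (hηK : 0 < etaConst K) : davenport G ≤ (davenport H - 1) * exponent K + etaConst K := by
  classical
  refine Nat.sInf_le fun S hS => ?_
  obtain ⟨B, hB⟩ := exists_isMaximalBlockDecomposition π S
  have hR := hB.card_sub_join_lt hηK
  have hRS : card (S - B.join) + card B.join = card S := by
    rw [← card_add, tsub_add_cancel_of_le hB.1.2]
  have hBK := hB.1.card_join_le
  have hD : davenport H ≤ card (B.map fun W => Function.invFun ρ W.sum) := by
    rw [card_map]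
    by_contra h
    have := Nat.mul_le_mul_right (exponent K) (Nat.le_sub_one_of_lt (not_le.1 h))
    omega
  obtain ⟨T, hT, hT0, hTsum⟩ := exists_zeroSum_of_davenport_le hηH hD
  obtain ⟨B', hB', hcard, hsum⟩ := hB.1.exists_le_sum_join_eq_zero hker hT hTsum
  refine ⟨B'.join, (join_le_join hB').trans hB.1.2, (hB.1.mono hB').join_ne_zero ?_, hsum⟩
  exact card_pos.1 (hcard ▸ card_pos.2 hT0)

theorem davenport_add_one_le_of_ker_le_range (hker : π.ker ≤ ρ.range) (hηH : 0 < etaConst H)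
    (hηK : 0 < etaConst K) (hK : 0 < exponent K) {t : ℕ} (hD : davenport H + 1 ≤ etaConst H - t) :
    davenport G + 1 ≤ (etaConst H - 1) * exponent K + etaConst K - t := by
  have hG := davenport_le_of_ker_le_range hker hηH hηK
  have hH := one_le_davenport hηH
  have := Nat.mul_le_mul_right (exponent K)
    (show davenport H - 1 + (t + 1) ≤ etaConst H - 1 by omega)
  rw [add_mul] at this
  have := Nat.le_mul_of_pos_right (t + 1) hK
  omega

theorem IsBlockDecomposition.card_lt_etaConst (hker : π.ker ≤ ρ.range) (hηH : 0 < etaConst H)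
    (hexp : exponent H * exponent K ≤ exponent G) (hS : ¬ HasShortZeroSumSubseq S)
    (hB : IsBlockDecomposition π S B) : card B < etaConst H := by
  by_contra h
  obtain ⟨T, hT, hT0, hT1, hTH⟩ := hasShortZeroSumSubseq_of_etaConst_le hηH
    (S := B.map fun W => Function.invFun ρ W.sum) (by rw [card_map]; omega)
  obtain ⟨B', hB', hcard, hsum⟩ := hB.exists_le_sum_join_eq_zero hker hT hT0
  have hB'0 : B' ≠ 0 := card_pos.1 (by omega)
  refine hS ⟨B'.join, (join_le_join hB').trans hB.2, hsum,
    card_pos.2 ((hB.mono hB').join_ne_zero hB'0), ?_⟩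
  calc card B'.join ≤ card B' * exponent K := (hB.mono hB').card_join_le
    _ ≤ exponent H * exponent K := Nat.mul_le_mul_right _ (hcard ▸ hTH)
    _ ≤ exponent G := hexp

end Lifting

def HasExtremalMultiplicities (K : Type*) [AddCommGroup K] [DecidableEq K] : Prop :=
  ∀ A : Multiset K, card A = etaConst K - 1 → ¬ HasShortZeroSumSubseq A →
    ∀ v, count v A = 0 ∨ count v A = exponent K - 1

theorem PropertyC.hasExtremalMultiplicities {n r : ℕ} (hr : 0 < r) (hC : PropertyC n r) :
    HasExtremalMultiplicities (Fin r → ZMod n) := by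
  obtain ⟨c, -, hη, hS⟩ := hC
  intro A hA hns v
  obtain ⟨g, hg, rfl⟩ := hS A (by omega) hns
  rw [exponent_pi_zmod n hr, count_sum']
  simp only [count_replicate]
  by_cases hv : ∃ i, g i = v
  · obtain ⟨i, rfl⟩ := hv
    exact Or.inr ((Finset.sum_eq_single i (fun j _ hj => if_neg (hg.ne hj)) (by simp)).trans
      (if_pos rfl))
  · exact Or.inl (Finset.sum_eq_zero fun i _ => if_neg fun h => hv ⟨i, h⟩)

section Exchange

variable {G K : Type*} [AddCommGroup G] [AddCommGroup K] [DecidableEq G] [DecidableEq K]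
  {π : G →+ K} {S W : Multiset G} {B : Multiset (Multiset G)}

namespace IsMaximalBlockDecomposition

theorem count_map_sub_join_eq_zero (hK : HasExtremalMultiplicities K)
    (hB : IsMaximalBlockDecomposition π S B) (hR : card (S - B.join) = etaConst K - 1)
    (hW : W ∈ B) (hWK : card W < exponent K) {w : G} (hw : w ∈ W) :
    count (π w) ((S - B.join).map π) = 0 := by
  -- otherwise `w` and `exponent K - 1` terms of the remainder over `π w` form a block longer
  -- than `W`, and exchanging it for `W` contradicts maximality
  refine (hK _ (by rwa [card_map]) hB.not_hasShortZeroSumSubseq (π w)).resolve_right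
    fun hcount => ?_
  obtain ⟨V, hV, hVπ⟩ := exists_le_map_eq (le_count_iff_replicate_le.1 hcount.ge)
  have hVcard : card V = exponent K - 1 := by simpa using congrArg card hVπ
  have hUπ : IsShortZeroSum ((w ::ₘ V).map π) := by
    rw [map_cons, hVπ, ← replicate_succ, Nat.sub_add_cancel (by omega)]
    exact ⟨by simp [exponent_nsmul_eq_zero], by simp; omega, by simp⟩
  have hU : w ::ₘ V ≤ W + (S - B.join) := by
    rw [← singleton_add]
    exact add_le_add (singleton_le.2 hw) hV
  have hmax := hB.2 _ (hB.1.exchange hW hU hUπ)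
  have := card_join_cons_erase (U := w ::ₘ V) hW
  rw [card_cons] at this
  omega

theorem exists_isShortZeroSum_cons (hηK : 0 < etaConst K)
    (hB : IsMaximalBlockDecomposition π S B) (hR : card (S - B.join) = etaConst K - 1) (w : G) :
    ∃ V ≤ S - B.join, IsShortZeroSum ((w ::ₘ V).map π) := by
  obtain ⟨Z, hZ, hZπ⟩ := hasShortZeroSumSubseq_of_etaConst_le hηK
    (S := π w ::ₘ (S - B.join).map π) (by simp; omega)
  by_cases hw : π w ∈ Z
  · obtain ⟨V, hV, hVπ⟩ := exists_le_map_eq (erase_le_iff_le_cons.2 hZ)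
    refine ⟨V, hV, ?_⟩
    rwa [map_cons, hVπ, cons_erase hw]
  · exact absurd ⟨Z, (le_cons_of_notMem hw).1 hZ, hZπ⟩ hB.not_hasShortZeroSumSubseq

theorem card_lt_two_or_exponent_le (hK : HasExtremalMultiplicities K) (hηK : 0 < etaConst K)
    (hB : IsMaximalBlockDecomposition π S B)
    (hcard : ∀ B', IsBlockDecomposition π S B' → card B' ≤ card B)
    (hR : card (S - B.join) = etaConst K - 1) (hW : W ∈ B) :
    card W < 2 ∨ exponent K ≤ card W := by
  by_contra! hW'
  obtain ⟨hW2, hWK⟩ := hW'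
  obtain ⟨w₀, hw₀⟩ := card_pos_iff_exists_mem.1 (show 0 < card W by omega)
  obtain ⟨w₁, hw₁⟩ := card_pos_iff_exists_mem.1
    (show 0 < card (W.erase w₀) by rw [card_erase_of_mem hw₀, Nat.pred_eq_sub_one]; omega)
  obtain ⟨V, hV, hUπ⟩ := hB.exists_isShortZeroSum_cons hηK hR w₀
  have hU : w₀ ::ₘ V ≤ W + (S - B.join) := by
    rw [← singleton_add]
    exact add_le_add (singleton_le.2 hw₀) hV
  set B₁ := (w₀ ::ₘ V) ::ₘ B.erase W
  have hB₁ : IsBlockDecomposition π S B₁ := hB.1.exchange hW hU hUπ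
  have hR₁ : S - B₁.join = W.erase w₀ + (S - B.join - V) := by
    rw [hB.1.sub_join_exchange hW, add_sub_cons_eq_erase_add_sub hw₀ hV]
  -- `B₁` has as many blocks as `B`, so its remainder has no short zero-sum subsequence either
  have hR₁π : ¬ HasShortZeroSumSubseq ((S - B₁.join).map π) := fun h => by
    obtain ⟨U, hU, hUπ⟩ := exists_le_isShortZeroSum_map h
    have := hcard _ (hB₁.cons hU hUπ)
    rw [card_cons, card_cons, card_erase_of_mem hW, Nat.pred_eq_sub_one] at this
    have := card_pos_iff_exists_mem.2 ⟨W, hW⟩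
    omega
  have hR₁card : card ((S - B₁.join).map π) = etaConst K - 1 := by
    have hle := hB.2 _ hB₁
    rw [card_sub hB.1.2] at hR
    rw [card_map, card_sub hB₁.2]
    by_contra h
    exact hR₁π (hasShortZeroSumSubseq_of_etaConst_le hηK (by rw [card_map, card_sub hB₁.2]; omega))
  have hcount := hK _ hR₁card hR₁π (π w₁)
  have h0 := hB.count_map_sub_join_eq_zero hK hR hW hWK (mem_of_mem_erase hw₁)
  have hV0 := count_le_of_le (π w₁) (map_le_map (f := π) (tsub_le_self : S - B.join - V ≤ _))
  have h1 : 1 ≤ count (π w₁) ((W.erase w₀).map π) := count_pos.2 (mem_map_of_mem _ hw₁)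
  have h2 : count (π w₁) ((W.erase w₀).map π) ≤ card W - 1 :=
    (count_le_card _ _).trans (by simp [card_erase_of_mem hw₀])
  rw [hR₁, map_add, count_add] at hcount
  omega

end IsMaximalBlockDecomposition

end Exchange

theorem hasShortZeroSumSubseq_of_card_mem_Icc {G H K : Type*} [AddCommGroup G] [AddCommGroup H]
    [AddCommGroup K] [DecidableEq G] [DecidableEq K] {π : G →+ K} {ρ : H →+ G}
    (hker : π.ker ≤ ρ.range)
    (hηH : 0 < etaConst H) (hηK : 0 < etaConst K) (hexp : exponent H * exponent K ≤ exponent G)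
    (hK : HasExtremalMultiplicities K) {t1 t2 : ℕ} (ht1 : t1 < exponent K)
    (ht2 : t2 = 1 ∨ t2 = 2)
    (hC0 : ∀ A : Multiset K, etaConst K - t1 ≤ card A → card A ≤ etaConst K - t2 → A.sum = 0 →
      HasShortZeroSumSubseq A)
    {S : Multiset G} (hS : S.sum = 0)
    (hSt1 : (etaConst H - 1) * exponent K + etaConst K - t1 ≤ card S)
    (hSt2 : card S ≤ (etaConst H - 1) * exponent K + etaConst K - t2) :
    HasShortZeroSumSubseq S := by
  by_contra hns
  obtain ⟨B, hB⟩ := exists_isMaximalBlockDecomposition π S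
  have hRS : card (S - B.join) + card B.join = card S := by
    rw [← card_add, tsub_add_cancel_of_le hB.1.2]
  have hBH := hB.1.card_lt_etaConst hker hηH hexp hns
  have hBK := hB.1.card_join_le
  have hHK := Nat.mul_le_mul_right (exponent K) (Nat.le_sub_one_of_lt hBH)
  have hRK := hB.card_sub_join_lt hηK
  set N := (etaConst H - 1) * exponent K with hN
  clear_value N
  -- the remainder is too long for `hC0`, which forces `t2 = 2` and `|R| = η(K) - 1`
  have hRt2 : etaConst K - t2 < card (S - B.join) := by
    by_contra h
    exact hB.not_hasShortZeroSumSubseq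
      (hC0 _ (by rw [card_map]; omega) (by rw [card_map]; omega) (hB.1.sum_map_sub_join hS))
  obtain ⟨rfl, hR⟩ : t2 = 2 ∧ card (S - B.join) = etaConst K - 1 := by omega
  have hm : card B = etaConst H - 1 := by
    by_contra h
    have := Nat.mul_le_mul_right (exponent K) (show card B + 1 ≤ etaConst H - 1 by omega)
    rw [add_one_mul, ← hN] at this
    omega
  have hBN : card B * exponent K = N := by rw [hm, hN]
  have hlt : card B.join < card B * exponent K := by omega
  obtain ⟨W, hW, hWK, hjoin⟩ := hB.1.exists_mem_card_lt hlt
  have hKN : exponent K ≤ N :=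
    hBN ▸ Nat.le_mul_of_pos_left _ (card_pos_iff_exists_mem.2 ⟨W, hW⟩)
  rw [Nat.sub_one_mul, hBN] at hjoin
  have := hB.card_lt_two_or_exponent_le hK hηK
    (fun B' hB' => hm ▸ Nat.le_sub_one_of_lt (hB'.card_lt_etaConst hker hηH hexp hns)) hR hW
  omega

theorem stmt_14_general (r n1 n2 : ℕ) (hr : 0 < r) (hn1 : 0 < n1)
    (c : ℕ)
    (h1 : etaConst (Fin r → ZMod n1) = c * (n1 - 1) + 1)
    (h2 : etaConst (Fin r → ZMod n2) = c * (n2 - 1) + 1)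
    (h3 : etaConst (Fin r → ZMod (n1 * n2)) = c * (n1 * n2 - 1) + 1)
    (hPC : PropertyC n2 r)
    (t1 t2 : ℕ) (ht1 : 1 ≤ t1 ∧ t1 ≤ n2 - 1) (ht2 : t2 = 1 ∨ t2 = 2) (ht21 : t2 ≤ t1)
    (hsub : ∀ t ∈ Set.Icc (etaConst (Fin r → ZMod n2) - t1) (etaConst (Fin r → ZMod n2) - t2),
      t ∈ C0 (Fin r → ZMod n2)) :
    ∀ t ∈ Set.Icc (etaConst (Fin r → ZMod (n1 * n2)) - t1)
        (etaConst (Fin r → ZMod (n1 * n2)) - t2),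
      t ∈ C0 (Fin r → ZMod (n1 * n2)) := by
  obtain ⟨ht1, ht1n⟩ := ht1
  have hexp (n : ℕ) : exponent (Fin r → ZMod n) = n := exponent_pi_zmod n hr
  have hη1 : 0 < etaConst (Fin r → ZMod n1) := by omega
  have hη2 : 0 < etaConst (Fin r → ZMod n2) := by omega
  have hker₁ := AddMonoidHom.ker_compLeft_le_range_compLeft
    (ker_castHom_le_range_zmodMulHom (mul_comm n2 n1) (dvd_mul_right n1 n2)) (Fin r)
  have hker₂ := AddMonoidHom.ker_compLeft_le_range_compLeft
    (ker_castHom_le_range_zmodMulHom rfl (dvd_mul_left n2 n1)) (Fin r)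
  have hE := mul_mul_sub_one_eq (c := c) hn1 (show 0 < n2 by omega)
  rintro t ⟨htl, htu⟩
  rw [h3] at htl htu
  refine ⟨?_, by rw [h3]; omega, fun S hS hS0 => ?_⟩
  · obtain ⟨hD2, -, -⟩ := hsub _ ⟨le_rfl, Nat.sub_le_sub_left ht21 _⟩
    have := davenport_add_one_le_of_ker_le_range hker₁ hη2 hη1 (by rw [hexp]; omega) hD2
    rw [hexp, h1, h2, Nat.add_sub_cancel] at this
    rw [mul_comm n1 n2, mul_mul_sub_one_eq (by omega) hn1] at htl
    omega
  · refine hasShortZeroSumSubseq_of_card_mem_Icc hker₂ hη1 hη2 (by rw [hexp, hexp, hexp])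
      (hPC.hasExtremalMultiplicities hr) (t1 := t1) (by rw [hexp]; omega) ht2
      (fun A hA1 hA2 hA0 => (hsub _ ⟨hA1, hA2⟩).2.2 A rfl hA0) hS0 ?_ ?_ <;>
    rw [h1, h2, hexp, Nat.add_sub_cancel] <;> omega

theorem stmt_14 (r n1 n2 : ℕ) (hr : 0 < r) (hn1 : 0 < n1) (hn2 : 0 < n2)
    (c : ℕ) (hc : 0 < c)
    (h1 : etaConst (Fin r → ZMod n1) = c * (n1 - 1) + 1)
    (h2 : etaConst (Fin r → ZMod n2) = c * (n2 - 1) + 1)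
    (h3 : etaConst (Fin r → ZMod (n1 * n2)) = c * (n1 * n2 - 1) + 1)
    (hPC : PropertyC n2 r)
    (t1 t2 : ℕ) (ht1 : 1 ≤ t1 ∧ t1 ≤ n2 - 1) (ht2 : t2 = 1 ∨ t2 = 2) (ht21 : t2 ≤ t1)
    (hsub : ∀ t ∈ Set.Icc (etaConst (Fin r → ZMod n2) - t1) (etaConst (Fin r → ZMod n2) - t2),
      t ∈ C0 (Fin r → ZMod n2)) :
    ∀ t ∈ Set.Icc (etaConst (Fin r → ZMod (n1 * n2)) - t1)
        (etaConst (Fin r → ZMod (n1 * n2)) - t2),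
      t ∈ C0 (Fin r → ZMod (n1 * n2)) :=
  stmt_14_general r n1 n2 hr hn1 c h1 h2 h3 hPC t1 t2 ht1 ht2 ht21 hsub
end

section
/- Let p be a prime, n a positive integer, and H a finite abelian p-group with p^n ≥ D(H). Then every sequence S over C_{p^n} ⊕ H of length |S| = 2p^n + D(H) - 2 contains a zero-sum subsequence T of length |T| ∈ {p^n, 2p^n}. -/
/-!
For `G ≃ ⊕ᵢ ZMod (p ^ eᵢ)`, Olson's theorem gives `D(G) = 1 + ∑ᵢ (p ^ eᵢ - 1)`. The lower bound
comes from the sequence with `p ^ eᵢ - 1` copies of each basis vector. For the upper bound, work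
in `(ZMod p)[G]`: a zero-sum free `S` makes `∏_{a ∈ S} (1 - X^a)` have constant coefficient `1`,
but every `1 - X^a` lies in the ideal generated by the `1 - X^{δᵢ}` for the basis vectors `δᵢ`,
and `(1 - X^{δᵢ}) ^ p ^ eᵢ = 0` by Frobenius, so any product of more than `∑ᵢ (p ^ eᵢ - 1)`
such factors vanishes.

Applied to `ZMod (p ^ n) × (ZMod (p ^ n) × H)`, whose Davenport constant is `2 p ^ n + D(H) - 2`,
the sequence `(1, s)_{s ∈ S}` has a nonempty zero-sum subsequence. Its length is divisible by
`p ^ n` (first coordinate) and less than `3 p ^ n` because `D(H) ≤ p ^ n`.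
-/

def IsZeroSumFree {G : Type*} [AddCommMonoid G] (S : Multiset G) : Prop :=
  ∀ T ≤ S, T ≠ 0 → T.sum ≠ 0

theorem not_isZeroSumFree_iff {G : Type*} [AddCommMonoid G] {S : Multiset G} :
    ¬ IsZeroSumFree S ↔ ∃ T, T ≤ S ∧ T ≠ 0 ∧ T.sum = 0 := by
  simp [IsZeroSumFree]

theorem IsZeroSumFree.map_addEquiv {G G' : Type*} [AddCommMonoid G] [AddCommMonoid G']
    {S : Multiset G} (hS : IsZeroSumFree S) (φ : G ≃+ G') : IsZeroSumFree (S.map φ) := by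
  intro T hT hT0 hsum
  refine hS (T.map φ.symm) ?_ (by simpa using hT0) (by rw [← map_multiset_sum, hsum, map_zero])
  simpa [Multiset.map_map] using Multiset.map_le_map (f := φ.symm) hT

theorem davenport_eq_of_isZeroSumFree {G : Type*} [AddCommGroup G] {S₀ : Multiset G}
    (h₀ : IsZeroSumFree S₀)
    (h : ∀ S : Multiset G, Multiset.card S₀ < Multiset.card S → ¬ IsZeroSumFree S) :
    davenport G = Multiset.card S₀ + 1 := by
  have hmem : Multiset.card S₀ + 1 ∈ {d : ℕ | ∀ S : Multiset G, d ≤ Multiset.card S →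
      ∃ T, T ≤ S ∧ T ≠ 0 ∧ T.sum = 0} :=
    fun S hS => not_isZeroSumFree_iff.mp (h S hS)
  refine le_antisymm (Nat.sInf_le hmem) ?_
  by_contra! hlt
  obtain ⟨T, hT, hT0, hsum⟩ := Nat.sInf_mem ⟨_, hmem⟩ S₀ (Nat.le_of_lt_succ hlt)
  exact h₀ T hT hT0 hsum

theorem ZMod.eq_zero_of_sum_eq_zero_of_sum_val_lt {m : ℕ} [NeZero m] {T : Multiset (ZMod m)}
    (hT : T.sum = 0) (hlt : (T.map ZMod.val).sum < m) : ∀ a ∈ T, a = 0 := by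
  have hcast : (((T.map ZMod.val).sum : ℕ) : ZMod m) = T.sum := by
    simp [Nat.cast_multiset_sum, Multiset.map_map]
  rw [hT, ZMod.natCast_eq_zero_iff] at hcast
  have hval := Multiset.sum_eq_zero_iff.mp (Nat.eq_zero_of_dvd_of_lt hcast hlt)
  exact fun a ha => (ZMod.val_eq_zero a).mp (hval _ (Multiset.mem_map_of_mem _ ha))

section SumReplicateSingle

variable {ι : Type*} [Fintype ι] [DecidableEq ι] (n : ι → ℕ)

theorem sum_map_val_apply_sum_replicate_single_le (i : ι) :
    ((∑ j, Multiset.replicate (n j - 1) (Pi.single j 1 : ∀ j, ZMod (n j))).map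
      fun t => (t i).val).sum ≤ n i - 1 := by
  have hmap := map_sum ((Multiset.sumAddMonoidHom).comp
    (Multiset.mapAddMonoidHom fun t : ∀ j, ZMod (n j) => (t i).val))
    (fun j => Multiset.replicate (n j - 1) (Pi.single j 1 : ∀ j, ZMod (n j))) Finset.univ
  simp only [AddMonoidHom.coe_comp, Function.comp_apply, Multiset.coe_sumAddMonoidHom,
    Multiset.coe_mapAddMonoidHom] at hmap
  rw [hmap]
  simp only [Multiset.map_replicate, Multiset.sum_replicate, smul_eq_mul]
  rw [Finset.sum_eq_single i (fun j _ hj => by simp [hj.symm]) (by simp)]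
  simpa using Nat.mul_le_mul_left (n i - 1)
    ((ZMod.val_one_eq_one_mod _).trans_le (Nat.mod_le 1 (n i)))

theorem isZeroSumFree_sum_replicate_single [∀ i, NeZero (n i)] :
    IsZeroSumFree (∑ i, Multiset.replicate (n i - 1) (Pi.single i 1 : ∀ i, ZMod (n i))) := by
  set W := ∑ i, Multiset.replicate (n i - 1) (Pi.single i 1 : ∀ i, ZMod (n i))
  intro T hTW hT0 hsum
  have hW : ∀ t ∈ W, ∃ i, 1 < n i ∧ t = Pi.single i 1 := by
    intro t ht
    obtain ⟨i, -, hi⟩ := Multiset.mem_sum.mp ht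
    obtain ⟨hn, rfl⟩ := Multiset.mem_replicate.mp hi
    exact ⟨i, by have := NeZero.ne (n i); omega, rfl⟩
  have hcoord : ∀ i, ∀ t ∈ T, t i = 0 := by
    intro i t ht
    refine ZMod.eq_zero_of_sum_eq_zero_of_sum_val_lt (T := T.map (· i)) ?_ ?_ _
      (Multiset.mem_map_of_mem _ ht)
    · rw [← Pi.multiset_sum_apply, hsum, Pi.zero_apply]
    · obtain ⟨U, hU⟩ := Multiset.le_iff_exists_add.mp hTW
      have hWi : (W.map fun t => (t i).val).sum ≤ n i - 1 :=
        sum_map_val_apply_sum_replicate_single_le n i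
      rw [hU] at hWi
      simp only [Multiset.map_add, Multiset.sum_add, Multiset.map_map, Function.comp_def] at hWi ⊢
      have := NeZero.ne (n i)
      omega
  obtain ⟨t, ht⟩ := Multiset.exists_mem_of_ne_zero hT0
  obtain ⟨i, hi, rfl⟩ := hW t (Multiset.mem_of_le hTW ht)
  have h1 : ((1 : ℕ) : ZMod (n i)) = 0 := by simpa using hcoord i _ ht
  rw [ZMod.natCast_eq_zero_iff] at h1
  exact absurd (Nat.le_of_dvd one_pos h1) (by omega)

end SumReplicateSingle

theorem Ideal.span_image_pow_eq_bot {R ι : Type*} [CommRing R] (x : ι → R)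
    (N : ι → ℕ) (hx : ∀ i, x i ^ N i = 0) (s : Finset ι) {m : ℕ}
    (hm : ∑ i ∈ s, (N i - 1) < m) : Ideal.span (x '' s) ^ m = ⊥ := by
  classical
  induction s using Finset.induction_on generalizing m with
  | empty => simpa using Ideal.bot_pow (by omega)
  | insert i s hi ih =>
    rw [Finset.sum_insert hi] at hm
    rw [Finset.coe_insert, Set.image_insert_eq, Ideal.span_insert, ← Submodule.add_eq_sup,
      add_pow, ← Submodule.zero_eq_bot]
    refine Finset.sum_eq_zero fun k _ => ?_
    by_cases hki : N i ≤ k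
    · rw [Ideal.span_singleton_pow, pow_eq_zero_of_le hki (hx i),
        Ideal.span_singleton_eq_bot.mpr rfl]
      simp
    · rw [Submodule.zero_eq_bot, ih (by omega)]
      simp

theorem Ideal.multiset_prod_mem_pow {R α : Type*} [CommRing R] {I : Ideal R} (f : α → R)
    (S : Multiset α) (hS : ∀ a ∈ S, f a ∈ I) : (S.map f).prod ∈ I ^ Multiset.card S := by
  induction S using Multiset.induction_on with
  | empty => simp
  | cons a S ih =>
    rw [Multiset.map_cons, Multiset.prod_cons, Multiset.card_cons, pow_succ']
    exact Ideal.mul_mem_mul (hS a (Multiset.mem_cons_self a S))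
      (ih fun b hb => hS b (Multiset.mem_cons_of_mem hb))

theorem AddMonoidAlgebra.coeff_prod_one_sub_single {R G : Type*} [CommRing R] [AddCommGroup G]
    [DecidableEq G] (S : Multiset G) (g : G) (hS : ∀ T ≤ S, T.sum = g → T = 0) :
    ((S.map fun a => (1 - single a 1 : AddMonoidAlgebra R G)).prod).coeff g =
      if g = 0 then 1 else 0 := by
  induction S using Multiset.induction_on generalizing g with
  | empty => simp [one_def, Finsupp.single_apply, eq_comm]
  | cons a S ih =>
    have hg : ∀ T ≤ S, T.sum = g → T = 0 := fun T hT =>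
      hS T (hT.trans (Multiset.le_cons_self S a))
    have hga : ∀ T ≤ S, T.sum ≠ -a + g := fun T hT hsum =>
      Multiset.cons_ne_zero (hS (a ::ₘ T) (Multiset.cons_le_cons a hT) (by simp [hsum]))
    have hga0 : -a + g ≠ 0 := fun h => hga 0 (Multiset.zero_le S) (by simp [h])
    rw [Multiset.map_cons, Multiset.prod_cons, sub_mul, one_mul, coeff_sub, Finsupp.sub_apply,
      coeff_single_mul_apply, one_mul, ih g hg, ih (-a + g) fun T hT h => (hga T hT h).elim,
      if_neg hga0, sub_zero]

theorem IsZeroSumFree.coeff_zero_prod_one_sub_single {R G : Type*} [CommRing R]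
    [AddCommGroup G] {S : Multiset G} (hS : IsZeroSumFree S) :
    ((S.map fun a => (1 - AddMonoidAlgebra.single a 1 : AddMonoidAlgebra R G)).prod).coeff 0
      = 1 := by
  classical
  rw [AddMonoidAlgebra.coeff_prod_one_sub_single S 0 fun T hT hsum => by
    by_contra hT0; exact hS T hT hT0 hsum, if_pos rfl]

theorem AddMonoidAlgebra.one_sub_single_mem_of_mem_closure {R G : Type*} [CommRing R]
    [AddMonoid G] (I : Ideal (AddMonoidAlgebra R G)) {s : Set G}
    (hs : ∀ a ∈ s, 1 - single a 1 ∈ I) {a : G} (ha : a ∈ AddSubmonoid.closure s) :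
    1 - single a 1 ∈ I := by
  induction ha using AddSubmonoid.closure_induction with
  | mem a ha => exact hs a ha
  | zero => simp [← one_def]
  | add a b _ _ ha hb =>
    have hadd : (1 - single (a + b) 1 : AddMonoidAlgebra R G) =
        (1 - single a 1) + single a 1 * (1 - single b 1) := by
      rw [mul_sub, mul_one, single_mul_single, one_mul]; abel
    rw [hadd]
    exact I.add_mem ha (I.mul_mem_left _ hb)

theorem Pi.mem_closure_range_single_one {ι : Type*} [Fintype ι] [DecidableEq ι] (n : ι → ℕ)
    [∀ i, NeZero (n i)] (a : ∀ i, ZMod (n i)) :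
    a ∈ AddSubmonoid.closure (Set.range fun i => (Pi.single i 1 : ∀ i, ZMod (n i))) := by
  rw [← Finset.univ_sum_single a]
  refine AddSubmonoid.sum_mem _ fun i _ => ?_
  rw [← ZMod.natCast_zmod_val (a i), ← nsmul_one, Pi.single_smul]
  exact AddSubmonoid.nsmul_mem _ (AddSubmonoid.subset_closure (Set.mem_range_self i)) _

open AddMonoidAlgebra in
theorem not_isZeroSumFree_of_sum_lt_card {p : ℕ} [Fact p.Prime] {ι : Type*} [Fintype ι]
    (e : ι → ℕ) (S : Multiset (∀ i, ZMod (p ^ e i)))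
    (hS : ∑ i, (p ^ e i - 1) < Multiset.card S) : ¬ IsZeroSumFree S := by
  classical
  intro hfree
  have : CharP (AddMonoidAlgebra (ZMod p) (∀ i, ZMod (p ^ e i))) p :=
    charP_of_injective_algebraMap' (ZMod p) p
  set X : (∀ i, ZMod (p ^ e i)) → AddMonoidAlgebra (ZMod p) (∀ i, ZMod (p ^ e i)) :=
    fun a => 1 - single a 1
  have hnil : ∀ i, X (Pi.single i 1) ^ p ^ e i = 0 := fun i => by
    rw [sub_pow_char_pow, one_pow, single_pow, one_pow, ← Pi.single_smul, nsmul_eq_mul, mul_one,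
      ZMod.natCast_self, Pi.single_zero, ← one_def, sub_self]
  set J := Ideal.span (Set.range fun i => X (Pi.single i 1))
  have hJ : J ^ Multiset.card S = ⊥ := by
    simpa [J, ← Set.image_univ] using Ideal.span_image_pow_eq_bot _ _ hnil Finset.univ hS
  have hX : ∀ a, X a ∈ J := fun a =>
    one_sub_single_mem_of_mem_closure J
      (by rintro _ ⟨i, rfl⟩; exact Ideal.subset_span (Set.mem_range_self i))
      (Pi.mem_closure_range_single_one _ a)
  have hprod := Ideal.multiset_prod_mem_pow X S fun a _ => hX a
  rw [hJ, Ideal.mem_bot] at hprod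
  simpa [X, hprod] using hfree.coeff_zero_prod_one_sub_single (R := ZMod p)

theorem davenport_eq_of_addEquiv_pi {p : ℕ} [Fact p.Prime] {G ι : Type*} [AddCommGroup G]
    [Fintype ι] (e : ι → ℕ) (φ : G ≃+ ∀ i, ZMod (p ^ e i)) :
    davenport G = ∑ i, (p ^ e i - 1) + 1 := by
  classical
  have hW := (isZeroSumFree_sum_replicate_single fun i => p ^ e i).map_addEquiv φ.symm
  convert davenport_eq_of_isZeroSumFree hW fun S hS hfree =>
    not_isZeroSumFree_of_sum_lt_card e (S.map φ) ?_ (hfree.map_addEquiv φ) using 2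
  · simp [Multiset.card_sum]
  · simpa [Multiset.card_sum] using hS

theorem exists_addEquiv_pi_zmod_prime_pow {p : ℕ} (hp : p.Prime) (H : Type*) [AddCommGroup H]
    [Fintype H] (hH : ∃ k, Fintype.card H = p ^ k) :
    ∃ (ι : Type) (_ : Fintype ι) (e : ι → ℕ), Nonempty (H ≃+ ∀ i, ZMod (p ^ e i)) := by
  obtain ⟨ι, _, q, -, f, ⟨φ⟩⟩ := AddCommGroup.equiv_directSum_zmod_of_finite H
  obtain ⟨k, hk⟩ := hH
  let φ' := φ.trans (DirectSum.addEquivProd _)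
  have hcard : Fintype.card H = ∏ i, q i ^ f i := by
    rw [← Nat.card_eq_fintype_card, Nat.card_congr φ'.toEquiv, Nat.card_pi]
    simp
  choose e he using fun i =>
    (Nat.dvd_prime_pow hp).mp (hk ▸ hcard ▸ Finset.dvd_prod_of_mem _ (Finset.mem_univ i))
  exact ⟨ι, inferInstance, e, ⟨φ'.trans (AddEquiv.piCongrRight fun i =>
    (ZMod.ringEquivCongr (he i).2).toAddEquiv)⟩⟩

def AddEquiv.prodPiOption {ι G : Type*} {β : Option ι → Type*} [∀ j, AddCommMonoid (β j)]
    [AddCommMonoid G] (φ : G ≃+ ∀ i, β (some i)) : β none × G ≃+ ∀ j, β j :=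
  (AddEquiv.prodCongr (AddEquiv.refl _) φ).trans
    (LinearEquiv.piOptionEquivProd (R := ℕ)).symm.toAddEquiv

theorem exists_zero_sum_dvd_card_of_not_isZeroSumFree {G : Type*} [AddCommGroup G] {m : ℕ}
    {S : Multiset G} (hS : ¬ IsZeroSumFree (S.map fun s => ((1 : ZMod m), s))) :
    ∃ T ≤ S, T ≠ 0 ∧ T.sum = 0 ∧ m ∣ Multiset.card T := by
  obtain ⟨T', hT'S, hT'0, hsum⟩ := not_isZeroSumFree_iff.mp hS
  have hfst : T'.map Prod.fst = Multiset.replicate (Multiset.card T') 1 := by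
    refine Multiset.eq_replicate.mpr ⟨by simp, fun a ha => ?_⟩
    obtain ⟨x, hx, rfl⟩ := Multiset.mem_map.mp ha
    obtain ⟨s, -, rfl⟩ := Multiset.mem_map.mp (Multiset.mem_of_le hT'S hx)
    rfl
  refine ⟨T'.map Prod.snd, ?_, by simpa using hT'0, ?_, ?_⟩
  · simpa [Multiset.map_map] using Multiset.map_le_map (f := Prod.snd) hT'S
  · simpa [hsum] using (map_multiset_sum (AddMonoidHom.snd (ZMod m) G) T').symm
  · have hfstsum := map_multiset_sum (AddMonoidHom.fst (ZMod m) G) T'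
    rw [hsum, map_zero, AddMonoidHom.coe_fst, hfst, Multiset.sum_replicate, nsmul_one,
      eq_comm, ZMod.natCast_eq_zero_iff] at hfstsum
    simpa using hfstsum

theorem stmt_15_general (p : ℕ) (hp : p.Prime) (n : ℕ)
    (H : Type*) [AddCommGroup H] [Fintype H] (hHp : ∃ k : ℕ, Fintype.card H = p ^ k)
    (hpD : davenport H ≤ p ^ n)
    (S : Multiset (ZMod (p ^ n) × H))
    (hS : Multiset.card S = 2 * p ^ n + davenport H - 2) :
    ∃ T, T ≤ S ∧ T.sum = 0 ∧
      (Multiset.card T = p ^ n ∨ Multiset.card T = 2 * p ^ n) := by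
  have : Fact p.Prime := ⟨hp⟩
  obtain ⟨ι, _, e, ⟨φ⟩⟩ := exists_addEquiv_pi_zmod_prime_pow hp H hHp
  have hDH := davenport_eq_of_addEquiv_pi e φ
  let ψ := AddEquiv.prodPiOption
    (β := fun j : Option (Option ι) => ZMod (p ^ j.elim n fun k => k.elim n e))
    (AddEquiv.prodPiOption (β := fun k : Option ι => ZMod (p ^ k.elim n e)) φ)
  have hS' : ¬ IsZeroSumFree (S.map fun s => ((1 : ZMod (p ^ n)), s)) := fun hfree =>
    not_isZeroSumFree_of_sum_lt_card _ _ (by simp [Fintype.sum_option]; omega)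
      (hfree.map_addEquiv ψ)
  obtain ⟨T, hTS, hT0, hTsum, m, hm⟩ := exists_zero_sum_dvd_card_of_not_isZeroSumFree hS'
  refine ⟨T, hTS, hTsum, ?_⟩
  have hle := Multiset.card_le_card hTS
  have hpos := Multiset.card_pos.mpr hT0
  have hm3 : m < 3 := Nat.lt_of_mul_lt_mul_left (a := p ^ n) (by omega)
  interval_cases m <;> omega

theorem stmt_15 (p : ℕ) (hp : p.Prime) (n : ℕ) (hn : 0 < n)
    (H : Type*) [AddCommGroup H] [Fintype H] (hHp : ∃ k : ℕ, Fintype.card H = p ^ k)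
    (hpD : davenport H ≤ p ^ n)
    (S : Multiset (ZMod (p ^ n) × H))
    (hS : Multiset.card S = 2 * p ^ n + davenport H - 2) :
    ∃ T, T ≤ S ∧ T.sum = 0 ∧
      (Multiset.card T = p ^ n ∨ Multiset.card T = 2 * p ^ n) :=
  stmt_15_general p hp n H hHp hpD S hS
end

section
/- Let G be a non-cyclic finite abelian group. Then every integer t with D(G) + 1 ≤ t ≤ min{2·exp(G) + 1, η(G) - 1} belongs to C_0(G); that is, every zero-sum sequence over G of length exactly t contains a short zero-sum subsequence. -/
/-!
Write a zero-sum sequence `S` of length `t > D(G)` as `a · S'`. Since `|S'| ≥ D(G)`, `S'` has a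
nonempty zero-sum subsequence `T`, and then `S T⁻¹` is a zero-sum subsequence too, nonempty
because it contains `a`. As `|T| + |S T⁻¹| = t ≤ 2 exp(G) + 1`, one of the two has length at
most `exp(G)`. The set defining `D(G)` is nonempty, so `D(G)` is attained, by the pigeonhole
principle on the `|G| + 1` prefix sums of a sequence of length `|G|`.
-/

section

variable {G : Type*} [AddCommGroup G]

theorem List.sum_take_drop_sub (L : List G) {i j : ℕ} (hij : i ≤ j) :
    ((L.drop i).take (j - i)).sum = (L.take j).sum - (L.take i).sum := by
  rw [eq_sub_iff_add_eq', ← List.sum_append, ← List.take_add, Nat.add_sub_cancel' hij]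

theorem List.exists_sublist_ne_nil_sum_eq_zero [Finite G] (L : List G)
    (hL : Nat.card G ≤ L.length) : ∃ T, T.Sublist L ∧ T ≠ [] ∧ T.sum = 0 := by
  obtain ⟨i, j, hsum, hne⟩ :
      ∃ i j : Fin (L.length + 1), (L.take i).sum = (L.take j).sum ∧ i ≠ j := by
    by_contra! h
    have := Nat.card_le_card_of_injective (fun i : Fin (L.length + 1) => (L.take i).sum) h
    rw [Nat.card_eq_fintype_card (α := Fin _), Fintype.card_fin] at this
    omega
  wlog hij : i < j generalizing i j
  · exact this j i hsum.symm hne.symm (lt_of_le_of_ne (not_lt.mp hij) hne.symm)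
  have hsub : ((L.drop i).take (j - i)).Sublist L :=
    (List.take_sublist _ _).trans (List.drop_sublist _ _)
  refine ⟨(L.drop i).take (j - i), hsub, ?_, ?_⟩
  · have := j.isLt
    rw [← List.length_pos_iff, List.length_take, List.length_drop]
    omega
  · rw [List.sum_take_drop_sub L hij.le, hsum, sub_self]

theorem Multiset.exists_le_ne_zero_sum_eq_zero [Finite G] (S : Multiset G)
    (hS : Nat.card G ≤ card S) : ∃ T ≤ S, T ≠ 0 ∧ T.sum = 0 := by
  induction S using Quotient.inductionOn with
  | h L =>
    obtain ⟨T, hTL, hT, hTsum⟩ := L.exists_sublist_ne_nil_sum_eq_zero (by simpa using hS)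
    exact ⟨T, Multiset.coe_le.mpr hTL.subperm, by simpa using hT, by simpa using hTsum⟩

theorem Multiset.sum_sub_eq_zero [DecidableEq G] {S T : Multiset G} (hTS : T ≤ S)
    (hS : S.sum = 0) (hT : T.sum = 0) : (S - T).sum = 0 := by
  have := congrArg Multiset.sum (Multiset.sub_add_cancel hTS)
  rwa [Multiset.sum_add, hT, add_zero, hS] at this

theorem exists_le_ne_zero_sum_eq_zero_of_davenport_le [Finite G] (S : Multiset G)
    (hS : davenport G ≤ Multiset.card S) : ∃ T ≤ S, T ≠ 0 ∧ T.sum = 0 :=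
  (Nat.sInf_mem ⟨Nat.card G, fun S hS => S.exists_le_ne_zero_sum_eq_zero hS⟩ :
    davenport G ∈ _) S hS

theorem hasShortZeroSumSubseq_of_card_le_two_mul_exponent_add_one [Finite G] {S : Multiset G}
    (hS : S.sum = 0) (hD : davenport G < Multiset.card S)
    (hexp : Multiset.card S ≤ 2 * AddMonoid.exponent G + 1) : HasShortZeroSumSubseq S := by
  classical
  obtain ⟨a, ha⟩ := Multiset.card_pos_iff_exists_mem.mp (Nat.zero_lt_of_lt hD)
  obtain ⟨S', rfl⟩ := Multiset.exists_cons_of_mem ha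
  rw [Multiset.card_cons] at hD hexp
  obtain ⟨T, hTS', hT0, hT⟩ := exists_le_ne_zero_sum_eq_zero_of_davenport_le S' (by omega)
  have hTS : T ≤ a ::ₘ S' := hTS'.trans (Multiset.le_cons_self _ _)
  have hTpos : 0 < Multiset.card T := Multiset.card_pos.mpr hT0
  have hTcard : Multiset.card T ≤ Multiset.card S' := Multiset.card_le_card hTS'
  by_cases hshort : Multiset.card T ≤ AddMonoid.exponent G
  · exact ⟨T, hTS, hT, hTpos, hshort⟩
  · refine ⟨a ::ₘ S' - T, Multiset.sub_le_self _ _, Multiset.sum_sub_eq_zero hTS hS hT, ?_⟩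
    rw [Multiset.card_sub hTS, Multiset.card_cons]
    omega

end

theorem stmt_17_general (G : Type*) [AddCommGroup G] [Finite G]
    (t : ℕ) (h1 : davenport G + 1 ≤ t)
    (h2 : t ≤ min (2 * AddMonoid.exponent G + 1) (etaConst G - 1)) :
    t ∈ C0 G := by
  obtain ⟨hexp, heta⟩ := le_min_iff.mp h2
  refine ⟨h1, heta, ?_⟩
  rintro S rfl hsum
  exact hasShortZeroSumSubseq_of_card_le_two_mul_exponent_add_one hsum h1 hexp

theorem stmt_17 (G : Type*) [AddCommGroup G] [Finite G] (hG : ¬ IsAddCyclic G)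
    (t : ℕ) (h1 : davenport G + 1 ≤ t)
    (h2 : t ≤ min (2 * AddMonoid.exponent G + 1) (etaConst G - 1)) :
    t ∈ C0 G :=
  stmt_17_general G t h1 h2
end
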